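/- Let c : ℤ → ℂ be a complex sequence and θ₀ ∈ [0, π/2) such that c_n + c_{−n} ∈ K(θ₀) for all n ≥ 1. If the symmetric partial sums ∑_{k=−n}^{n} c_k e^{ikx} converge at every x ∈ ℝ and the sum function f belongs to C_{2π} (i.e., f is continuous and 2π-periodic), then ∑_{n=1}^{∞} |c_n + c_{−n}| < ∞. -/

import Mathlib

open Filter Finset

private lemma sum_Icc_neg_eq (g : ℤ → ℂ) (n : ℕ) :
    ∑ k ∈ Finset.Icc (-(n : ℤ)) (n : ℤ), g k
      = g 0 + ∑ j ∈ Finset.range n, (g ((j : ℤ) + 1) + g (-((j : ℤ) + 1))) := by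
  induction n with
  | zero => simp
  | succ n ih =>
    have h1 : Finset.Icc (-((n + 1 : ℕ) : ℤ)) ((n + 1 : ℕ) : ℤ)
        = insert ((n : ℤ) + 1) (insert (-((n : ℤ) + 1)) (Finset.Icc (-(n : ℤ)) (n : ℤ))) := by
      ext k
      simp only [Finset.mem_Icc, Finset.mem_insert]
      omega
    have h2 : ((n : ℤ) + 1) ∉ insert (-((n : ℤ) + 1)) (Finset.Icc (-(n : ℤ)) (n : ℤ)) := by
      simp only [Finset.mem_insert, Finset.mem_Icc]; omega
    have h3 : (-((n : ℤ) + 1)) ∉ Finset.Icc (-(n : ℤ)) (n : ℤ) := by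
      simp only [Finset.mem_Icc]; omega
    rw [h1, Finset.sum_insert h2, Finset.sum_insert h3, ih, Finset.sum_range_succ]
    ring

/-- Lemma 1 of the paper (Xie and Zhou): if `cₙ + c₋ₙ` lies in the sector `K(θ₀)`
for all `n ≥ 1` and the symmetric partial sums converge pointwise to a continuous
2π-periodic function `f`, then `∑ |cₙ + c₋ₙ| < ∞`. -/
theorem lemma1 (c : ℤ → ℂ) (θ₀ : ℝ) (hθ₀ : 0 ≤ θ₀) (hθ₁ : θ₀ < Real.pi / 2)
    (hK : ∀ n : ℤ, 1 ≤ n → |(c n + c (-n)).arg| ≤ θ₀)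
    (f : ℝ → ℂ) (hf_cont : Continuous f) (hf_per : Function.Periodic f (2 * Real.pi))
    (hconv : ∀ x : ℝ, Tendsto (fun n : ℕ =>
        ∑ k ∈ Finset.Icc (-(n : ℤ)) (n : ℤ), c k * Complex.exp ((k : ℂ) * (x : ℂ) * Complex.I))
      atTop (nhds (f x))) :
    Summable (fun n : ℕ => ‖c ((n : ℤ) + 1) + c (-((n : ℤ) + 1))‖) := by
  set a : ℕ → ℂ := fun j => c ((j : ℤ) + 1) + c (-((j : ℤ) + 1)) with ha
  have hcos : 0 < Real.cos θ₀ :=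
    Real.cos_pos_of_mem_Ioo ⟨by linarith [Real.pi_pos], hθ₁⟩
  -- key sector inequality : |a j| * cos θ₀ ≤ (a j).re, and 0 ≤ (a j).re
  have hkey : ∀ j : ℕ, ‖a j‖ * Real.cos θ₀ ≤ (a j).re := by
    intro j
    by_cases hz : a j = 0
    · simp [hz]
    · have harg : |(a j).arg| ≤ θ₀ := hK ((j : ℤ) + 1) (by omega)
      have hc : Real.cos ((a j).arg) = (a j).re / ‖a j‖ :=
        Complex.cos_arg hz
      have habs : 0 < ‖a j‖ := by
        exact norm_pos_iff.mpr hz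
      have hcc : Real.cos θ₀ ≤ Real.cos ((a j).arg) := by
        rw [← Real.cos_abs ((a j).arg)]
        apply Real.cos_le_cos_of_nonneg_of_le_pi (abs_nonneg _) _ harg
        linarith [Real.pi_pos, hθ₁]
      have := mul_le_mul_of_nonneg_left hcc habs.le
      rw [hc, mul_div_cancel₀ _ habs.ne'] at this
      linarith
  have hre_nonneg : ∀ j : ℕ, 0 ≤ (a j).re := fun j =>
    le_trans (by positivity) (hkey j)
  -- convergence at x = 0
  have h0 := hconv 0
  have heq : ∀ n : ℕ, (∑ k ∈ Finset.Icc (-(n : ℤ)) (n : ℤ),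
      c k * Complex.exp ((k : ℂ) * ((0 : ℝ) : ℂ) * Complex.I))
      = c 0 + ∑ j ∈ Finset.range n, a j := by
    intro n
    rw [show (∑ k ∈ Finset.Icc (-(n : ℤ)) (n : ℤ),
        c k * Complex.exp ((k : ℂ) * ((0 : ℝ) : ℂ) * Complex.I))
        = ∑ k ∈ Finset.Icc (-(n : ℤ)) (n : ℤ), c k by
      apply Finset.sum_congr rfl
      intro k _
      simp]
    exact sum_Icc_neg_eq c n
  rw [show (fun n : ℕ => ∑ k ∈ Finset.Icc (-(n : ℤ)) (n : ℤ),
      c k * Complex.exp ((k : ℂ) * ((0 : ℝ) : ℂ) * Complex.I))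
      = fun n : ℕ => c 0 + ∑ j ∈ Finset.range n, a j from funext heq] at h0
  have hS : Tendsto (fun n : ℕ => ∑ j ∈ Finset.range n, a j) atTop (nhds (f 0 - c 0)) := by
    have := h0.sub (tendsto_const_nhds (x := c 0))
    simpa [add_sub_cancel_left, sub_eq_add_neg, add_comm] using this.congr (fun n => by ring)
  -- real parts
  have hSre : Tendsto (fun n : ℕ => ∑ j ∈ Finset.range n, (a j).re) atTop
      (nhds ((f 0 - c 0).re)) := by
    have := (Complex.continuous_re.tendsto _).comp hS
    simpa [Function.comp_def, Complex.re_sum] using this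
  have hmono : Monotone (fun n : ℕ => ∑ j ∈ Finset.range n, (a j).re) := by
    intro m n hmn
    exact Finset.sum_le_sum_of_subset_of_nonneg (Finset.range_subset_range.2 hmn)
      (fun i _ _ => hre_nonneg i)
  have hbdd : ∀ n : ℕ, ∑ j ∈ Finset.range n, (a j).re ≤ (f 0 - c 0).re :=
    fun n => hmono.ge_of_tendsto hSre n
  have hsum_re : Summable (fun j : ℕ => (a j).re) :=
    summable_of_sum_range_le hre_nonneg hbdd
  -- comparison
  have : Summable (fun j : ℕ => (Real.cos θ₀)⁻¹ * (a j).re) := hsum_re.mul_left _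
  apply this.of_nonneg_of_le (fun j => norm_nonneg _)
  intro j
  rw [inv_mul_eq_div, le_div_iff₀ hcos]
  exact hkey j
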